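/- arXiv:1205.6844 — 2 statements merged into one kernel-verified Lean document; each statement's English description precedes it below -/
import Mathlib

section
/- Let m > 2 be a real conductivity exponent, let G be an ignition-type reaction term with threshold θ ∈ (0,1), let ε ∈ (0,θ), and let c > 0 and p be a solution of the travelling-wave problem with ε < p < 1 and p strictly increasing. Then for every x ∈ ℝ with p(x) ≤ θ one has p'(x) = (m−2)·c·(1 − (ε/p(x))^{1/(m−2)}). In particular p'(0) = (m−2)·c·(1 − (ε/θ)^{1/(m−2)}). -/
open Filter Set

/-- An ignition-type reaction term with threshold `θ`. -/
def Ignition (G : ℝ → ℝ) (θ : ℝ) : Prop :=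
  ContDiff ℝ 1 G ∧ 0 < θ ∧ θ < 1 ∧
  (∀ μ ∈ Set.Icc (0:ℝ) θ, G μ = 0) ∧
  (∀ μ ∈ Set.Ioo θ (1:ℝ), 0 < G μ) ∧
  G 1 = 0 ∧ deriv G 1 < 0

/-- The travelling-wave problem: speed `c`, profile `p`. -/
def IsTW (m θ ε : ℝ) (G : ℝ → ℝ) (c : ℝ) (p : ℝ → ℝ) : Prop :=
  ContDiff ℝ 2 p ∧
  (∀ x : ℝ, -(p x) * deriv (deriv p) x
      + (c - deriv p x / (m - 2)) * deriv p x = G (p x)) ∧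
  Filter.Tendsto p Filter.atBot (nhds ε) ∧
  Filter.Tendsto p Filter.atTop (nhds 1) ∧
  p 0 = θ

open Topology

/-!
Where `p ≤ θ` the reaction term vanishes, and with `k = m - 2` the equation then says exactly that
`(k c - p') p ^ (1 / k)` has zero derivative. Since `p` is increasing with `p 0 = θ`, this quantity
is constant on `(-∞, 0]`. Along a sequence tending to `-∞` on which `p' → 0` (mean value theorem,
as `p → ε`) it tends to `k c ε ^ (1 / k)`, and solving for `p'` gives the formula.
-/

noncomputable def firstIntegral (k c : ℝ) (p : ℝ → ℝ) (x : ℝ) : ℝ :=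
  (k * c - deriv p x) * p x ^ (1 / k)

theorem hasDerivAt_firstIntegral {k c x : ℝ} {p : ℝ → ℝ} (hk : k ≠ 0) (hpx : 0 < p x)
    (hp : DifferentiableAt ℝ p x) (hp' : DifferentiableAt ℝ (deriv p) x)
    (hode : -(p x) * deriv (deriv p) x + (c - deriv p x / k) * deriv p x = 0) :
    HasDerivAt (firstIntegral k c p) 0 x := by
  have hpow : HasDerivAt (fun y => p y ^ (1 / k))
      (deriv p x * (1 / k) * p x ^ (1 / k - 1)) x :=
    hp.hasDerivAt.rpow_const (Or.inl hpx.ne')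
  refine (((hasDerivAt_const x (k * c)).sub hp'.hasDerivAt).mul hpow).congr_deriv ?_
  have hsplit : p x ^ (1 / k) = p x ^ (1 / k - 1) * p x := by
    rw [← Real.rpow_add_one hpx.ne']; norm_num
  have hinv : k * (1 / k) = 1 := mul_one_div_cancel hk
  rw [hsplit, Pi.sub_apply]
  linear_combination p x ^ (1 / k - 1) * hode + c * deriv p x * p x ^ (1 / k - 1) * hinv

theorem eq_of_hasDerivAt_zero_of_le {f : ℝ → ℝ} {b : ℝ}
    (hf : ∀ y ≤ b, HasDerivAt f 0 y) {x : ℝ} (hx : x ≤ b) : f x = f b :=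
  (constant_of_has_deriv_right_zero
    (fun y hy => (hf y hy.2).continuousAt.continuousWithinAt)
    (fun y hy => (hf y hy.2.le).hasDerivWithinAt) b ⟨hx, le_rfl⟩).symm

theorem exists_seq_tendsto_atBot_deriv_tendsto_zero {f : ℝ → ℝ} {a : ℝ}
    (hf : Differentiable ℝ f) (hlim : Tendsto f atBot (𝓝 a)) :
    ∃ ξ : ℕ → ℝ, Tendsto ξ atTop atBot ∧ Tendsto (fun n => deriv f (ξ n)) atTop (𝓝 0) := by
  have hslope (n : ℕ) : ∃ ξ ∈ Ioo (-(n : ℝ) - 1) (-n),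
      deriv f ξ = (f (-n) - f (-n - 1)) / (-n - (-n - 1)) :=
    exists_deriv_eq_slope f (by linarith) hf.continuous.continuousOn hf.differentiableOn
  choose ξ hξ hξderiv using hslope
  have hn : Tendsto (fun n : ℕ => -(n : ℝ)) atTop atBot :=
    tendsto_neg_atBot_iff.mpr tendsto_natCast_atTop_atTop
  refine ⟨ξ, tendsto_atBot_mono (fun n => (hξ n).2.le) hn, ?_⟩
  have hdiff : Tendsto (fun n : ℕ => f (-n) - f (-n - 1)) atTop (𝓝 (a - a)) :=
    (hlim.comp hn).sub (hlim.comp (tendsto_atBot_add_const_right _ _ hn))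
  rw [sub_self] at hdiff
  simpa [hξderiv] using hdiff

theorem deriv_eq_of_firstIntegral_eq {k c ε : ℝ} {p : ℝ → ℝ} {x : ℝ} (hε : 0 ≤ ε)
    (hpx : 0 < p x) (h : firstIntegral k c p x = k * c * ε ^ (1 / k)) :
    deriv p x = k * c * (1 - (ε / p x) ^ (1 / k)) := by
  have hpow : 0 < p x ^ (1 / k) := Real.rpow_pos_of_pos hpx _
  rw [firstIntegral] at h
  rw [Real.div_rpow hε hpx.le]
  field_simp
  linear_combination -h

theorem stmt1_general (m θ ε c : ℝ) (G p : ℝ → ℝ) (hm : 2 < m)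
    (hG : Ignition G θ) (hε : ε ∈ Set.Ioo 0 θ)
    (hp : IsTW m θ ε G c p)
    (hrange : ∀ x : ℝ, ε < p x ∧ p x < 1) (hmono : StrictMono p) :
    (∀ x : ℝ, p x ≤ θ →
      deriv p x = (m - 2) * c * (1 - (ε / p x) ^ (1 / (m - 2)))) ∧
    deriv p 0 = (m - 2) * c * (1 - (ε / θ) ^ (1 / (m - 2))) := by
  obtain ⟨hp2, hode, hbot, -, hp0⟩ := hp
  have hpos x : 0 < p x := hε.1.trans (hrange x).1
  have hdiff : Differentiable ℝ p := hp2.differentiable (by norm_num)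
  have hdiff' : Differentiable ℝ (deriv p) := hp2.differentiable_deriv_two
  have hle_iff x : p x ≤ θ ↔ x ≤ 0 := hp0 ▸ hmono.le_iff_le
  have hconst x (hx : x ≤ 0) : firstIntegral (m - 2) c p x = firstIntegral (m - 2) c p 0 := by
    refine eq_of_hasDerivAt_zero_of_le (fun y hy => ?_) hx
    refine hasDerivAt_firstIntegral (by linarith) (hpos y) (hdiff y) (hdiff' y) ?_
    rw [hode y, hG.2.2.2.1 (p y) ⟨(hpos y).le, (hle_iff y).2 hy⟩]
  obtain ⟨ξ, hξ, hξderiv⟩ := exists_seq_tendsto_atBot_deriv_tendsto_zero hdiff hbot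
  have hlim : Tendsto (fun n => firstIntegral (m - 2) c p (ξ n)) atTop
      (𝓝 (((m - 2) * c - 0) * ε ^ (1 / (m - 2)))) :=
    (tendsto_const_nhds.sub hξderiv).mul
      ((Real.continuousAt_rpow_const ε _ (Or.inl hε.1.ne')).tendsto.comp (hbot.comp hξ))
  have hvalue : firstIntegral (m - 2) c p 0 = (m - 2) * c * ε ^ (1 / (m - 2)) := by
    rw [sub_zero] at hlim
    refine tendsto_nhds_unique (tendsto_const_nhds.congr' ?_) hlim
    filter_upwards [hξ.eventually_le_atBot 0] with n hn using (hconst _ hn).symm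
  have hformula x (hx : p x ≤ θ) :=
    deriv_eq_of_firstIntegral_eq hε.1.le (hpos x) ((hconst x ((hle_iff x).1 hx)).trans hvalue)
  exact ⟨hformula, hp0 ▸ hformula 0 hp0.le⟩

theorem stmt1 (m θ ε c : ℝ) (G p : ℝ → ℝ) (hm : 2 < m)
    (hG : Ignition G θ) (hε : ε ∈ Set.Ioo 0 θ) (hc : 0 < c)
    (hp : IsTW m θ ε G c p)
    (hrange : ∀ x : ℝ, ε < p x ∧ p x < 1) (hmono : StrictMono p) :
    (∀ x : ℝ, p x ≤ θ →
      deriv p x = (m - 2) * c * (1 - (ε / p x) ^ (1 / (m - 2)))) ∧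
    deriv p 0 = (m - 2) * c * (1 - (ε / θ) ^ (1 / (m - 2))) :=
  stmt1_general m θ ε c G p hm hG hε hp hrange hmono
end

section
/- Let m > 2 be a real conductivity exponent, let G be an ignition-type reaction term with threshold θ ∈ (0,1), let ε ∈ (0,θ), and let c > 0 and p be a solution of the travelling-wave problem with ε < p < 1 and p strictly increasing. Then there exists a constant L > 0 such that p'(x)·e^{−c·x/ε} → L as x → −∞, and there exist M > 0 and x̄ ∈ ℝ such that 0 < p(x) − ε ≤ M·e^{c·x/ε} for all x ≤ x̄. -/
open Filter Set

/-!
For `x ≤ 0` the profile stays below `θ`, so the reaction vanishes and `p'' = φ p'` with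
`φ = (c - p'/(m-2))/p`. A fencing argument gives `p' ≤ c(m-2)` there, so `p'' ≥ 0`, and since
`p` converges, `p' → 0` at `-∞`. Far to the left `φ ≥ c/2`, which makes `p - ε` and `p'` decay
like `e^{cx/2}`, while `φ ≤ c/ε` everywhere. Hence `w = p' e^{-cx/ε}` is nonincreasing, and it
is bounded because `c/ε - φ = O(e^{cx/2})` is integrable at `-∞`; its limit `L` is its
supremum, so `L > 0`. Integrating `p' ≤ 2L e^{cx/ε}` from `-∞` bounds `p - ε`.
-/

open Real Topology

section Comparison

variable {f g f' g' : ℝ → ℝ} {a : ℝ}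

theorem monotoneOn_Iic_of_hasDerivAt (hf : ∀ x, HasDerivAt f (f' x) x)
    (hf' : ∀ x < a, 0 ≤ f' x) : MonotoneOn f (Iic a) :=
  monotoneOn_of_hasDerivWithinAt_nonneg (convex_Iic a)
    (fun x _ => (hf x).continuousAt.continuousWithinAt) (fun x _ => (hf x).hasDerivWithinAt)
    (by rw [interior_Iic]; exact hf')

theorem antitoneOn_Iic_of_hasDerivAt (hf : ∀ x, HasDerivAt f (f' x) x)
    (hf' : ∀ x < a, f' x ≤ 0) : AntitoneOn f (Iic a) :=
  antitoneOn_of_hasDerivWithinAt_nonpos (convex_Iic a)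
    (fun x _ => (hf x).continuousAt.continuousWithinAt) (fun x _ => (hf x).hasDerivWithinAt)
    (by rw [interior_Iic]; exact hf')

theorem MonotoneOn.le_of_tendsto_atBot {l : ℝ} (hf : MonotoneOn f (Iic a))
    (hl : Tendsto f atBot (𝓝 l)) {x : ℝ} (hx : x ≤ a) : l ≤ f x :=
  le_of_tendsto hl <| (eventually_le_atBot x).mono fun _ hy => hf (hy.trans hx) hx hy

theorem AntitoneOn.exists_tendsto_atBot {M : ℝ} (hf : AntitoneOn f (Iic a))
    (hM : ∀ x ≤ a, f x ≤ M) : ∃ L, Tendsto f atBot (𝓝 L) := by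
  have hanti : Antitone fun x => f (min x a) := fun x y hxy =>
    hf (mem_Iic.2 (min_le_right _ _)) (mem_Iic.2 (min_le_right _ _)) (min_le_min_right a hxy)
  refine ⟨_, (tendsto_atBot_ciSup hanti ⟨M, ?_⟩).congr' ?_⟩
  · rintro _ ⟨x, rfl⟩
    exact hM _ (min_le_right _ _)
  · filter_upwards [eventually_le_atBot a] with x hx
    rw [min_eq_left hx]

theorem le_of_deriv_le_of_tendsto_sub_atBot (hf : ∀ x, HasDerivAt f (f' x) x)
    (hg : ∀ x, HasDerivAt g (g' x) x) (hfg : Tendsto (fun x => f x - g x) atBot (𝓝 0))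
    (hd : ∀ x < a, f' x ≤ g' x) {x : ℝ} (hx : x ≤ a) : f x ≤ g x := by
  have hmono : MonotoneOn (fun x => g x - f x) (Iic a) :=
    monotoneOn_Iic_of_hasDerivAt (fun x => (hg x).sub (hf x)) fun x hx => sub_nonneg.2 (hd x hx)
  have hlim : Tendsto (fun x => g x - f x) atBot (𝓝 0) := by
    simpa only [neg_sub, neg_zero] using hfg.neg
  exact sub_nonneg.1 (hmono.le_of_tendsto_atBot hlim hx)

theorem le_mul_exp_of_mul_le_deriv {k : ℝ} (hf : ∀ x, HasDerivAt f (f' x) x)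
    (hd : ∀ x < a, k * f x ≤ f' x) {x : ℝ} (hx : x ≤ a) :
    f x ≤ f a * exp (k * (x - a)) := by
  have hmono : MonotoneOn (fun x => f x * exp (-(k * x))) (Iic a) := by
    refine monotoneOn_Iic_of_hasDerivAt (f' := fun x => (f' x - k * f x) * exp (-(k * x)))
      (fun x => ((hf x).mul ((hasDerivAt_id' x).const_mul k).neg.exp).congr_deriv
        (by simp only [Pi.neg_apply]; ring)) fun x hx => ?_
    exact mul_nonneg (sub_nonneg.2 (hd x hx)) (exp_pos _).le
  have h := hmono hx (mem_Iic.2 le_rfl) hx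
  calc f x = f x * exp (-(k * x)) * exp (k * x) := by rw [mul_assoc, ← exp_add]; simp
    _ ≤ f a * exp (-(k * a)) * exp (k * x) := by gcongr
    _ = f a * exp (k * (x - a)) := by rw [mul_assoc, ← exp_add]; ring_nf

theorem exists_deriv_lt_of_tendsto_atBot {l b : ℝ} (hf : Differentiable ℝ f)
    (hl : Tendsto f atBot (𝓝 l)) (hb : 0 < b) (a : ℝ) : ∃ x ≤ a, deriv f x < b := by
  have hslope : Tendsto (fun y => (f a - f y) / (a - y)) atBot (𝓝 0) := by
    have hden : Tendsto (fun y => a - y) atBot atTop :=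
      tendsto_atTop_add_const_left _ _ tendsto_neg_atBot_atTop
    simpa using (tendsto_const_nhds.sub hl).div_atTop hden
  obtain ⟨y, hy, hya⟩ := ((hslope.eventually (gt_mem_nhds hb)).and
    (eventually_lt_atBot a)).exists
  obtain ⟨x, hx, hxy⟩ := exists_deriv_eq_slope f hya hf.continuous.continuousOn
    hf.differentiableOn
  exact ⟨x, hx.2.le, hxy ▸ hy⟩

theorem tendsto_deriv_atBot_of_monotoneOn {l : ℝ} (hf : Differentiable ℝ f)
    (hl : Tendsto f atBot (𝓝 l)) (hmono : MonotoneOn (deriv f) (Iic a))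
    (hnn : ∀ x, 0 ≤ deriv f x) : Tendsto (deriv f) atBot (𝓝 0) := by
  refine tendsto_order.2 ⟨fun b hb => .of_forall fun x => hb.trans_le (hnn x), fun b hb => ?_⟩
  obtain ⟨x₀, hx₀, hlt⟩ := exists_deriv_lt_of_tendsto_atBot hf hl hb a
  exact eventually_atBot.2 ⟨x₀, fun y hy => (hmono (hy.trans hx₀) hx₀ hy).trans_lt hlt⟩

theorem sub_le_mul_exp_of_deriv_le {l lam C : ℝ} (hf : ∀ x, HasDerivAt f (f' x) x)
    (hl : Tendsto f atBot (𝓝 l)) (hlam : 0 < lam) (hd : ∀ x < a, f' x ≤ C * exp (lam * x))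
    {x : ℝ} (hx : x ≤ a) : f x - l ≤ C / lam * exp (lam * x) := by
  have hg : ∀ x, HasDerivAt (fun x => l + C / lam * exp (lam * x)) (C * exp (lam * x)) x :=
    fun x => ((((hasDerivAt_id' x).const_mul lam).exp.const_mul (C / lam)).const_add l).congr_deriv
      (by field_simp)
  have hexp : Tendsto (fun x => exp (lam * x)) atBot (𝓝 0) :=
    tendsto_exp_atBot.comp (tendsto_id.const_mul_atBot hlam)
  have hlim : Tendsto (fun x => f x - (l + C / lam * exp (lam * x))) atBot (𝓝 0) := by
    simpa using hl.sub ((hexp.const_mul (C / lam)).const_add l)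
  have := le_of_deriv_le_of_tendsto_sub_atBot hf hg hlim hd hx
  linarith

theorem exists_tendsto_mul_exp_neg_of_deriv_bounds {lam C k : ℝ} (hg : Differentiable ℝ g)
    (hk : 0 < k) (hC : 0 ≤ C) (ha : 0 < g a)
    (hlow : ∀ x < a, (lam - C * exp (k * x)) * g x ≤ deriv g x)
    (hup : ∀ x < a, deriv g x ≤ lam * g x) :
    ∃ L, 0 < L ∧ Tendsto (fun x => g x * exp (-(lam * x))) atBot (𝓝 L) := by
  set w := fun x => g x * exp (-(lam * x))
  have hw' : ∀ x, HasDerivAt w ((deriv g x - lam * g x) * exp (-(lam * x))) x := fun x =>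
    ((hg x).hasDerivAt.mul ((hasDerivAt_id' x).const_mul lam).neg.exp).congr_deriv
      (by simp only [Pi.neg_apply]; ring)
  have hanti : AntitoneOn w (Iic a) := antitoneOn_Iic_of_hasDerivAt hw' fun x hx =>
    mul_nonpos_of_nonpos_of_nonneg (sub_nonpos.2 (hup x hx)) (exp_pos _).le
  have hwa : 0 < w a := mul_pos ha (exp_pos _)
  -- `exp Ψ` is an integrating factor for the defect `C e^{kx}` in the lower bound on `g'`
  set Ψ := fun x => C / k * exp (k * x)
  have hV' : ∀ x, HasDerivAt (fun x => w x * exp (Ψ x))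
      ((deriv g x - (lam - C * exp (k * x)) * g x) * exp (-(lam * x)) * exp (Ψ x)) x := fun x =>
    ((hw' x).mul (((hasDerivAt_id' x).const_mul k).exp.const_mul (C / k)).exp).congr_deriv
      (by simp only [w, Ψ]; field_simp; ring)
  have hV : MonotoneOn (fun x => w x * exp (Ψ x)) (Iic a) :=
    monotoneOn_Iic_of_hasDerivAt hV' fun x hx =>
      mul_nonneg (mul_nonneg (sub_nonneg.2 (hlow x hx)) (exp_pos _).le) (exp_pos _).le
  have hbdd : ∀ x ≤ a, w x ≤ w a * exp (Ψ a) := fun x hx =>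
    calc w x ≤ w x * exp (Ψ x) :=
          le_mul_of_one_le_right (hwa.le.trans (hanti hx (mem_Iic.2 le_rfl) hx))
            (one_le_exp (by positivity))
      _ ≤ w a * exp (Ψ a) := hV hx (mem_Iic.2 le_rfl) hx
  obtain ⟨L, hL⟩ := hanti.exists_tendsto_atBot hbdd
  refine ⟨L, hwa.trans_le (ge_of_tendsto hL ?_), hL⟩
  filter_upwards [eventually_le_atBot a] with x hx
  exact hanti hx (mem_Iic.2 le_rfl) hx

end Comparison

theorem IsTW.deriv_deriv_eq {m θ ε c : ℝ} {G p : ℝ → ℝ} (hG : Ignition G θ)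
    (hp : IsTW m θ ε G c p) (hmono : Monotone p) (hpos : ∀ x, 0 < p x) {x : ℝ}
    (hx : x ≤ 0) :
    deriv (deriv p) x = (c - deriv p x / (m - 2)) / p x * deriv p x := by
  have hG0 : G (p x) = 0 := hG.2.2.2.1 _ ⟨(hpos x).le, hp.2.2.2.2 ▸ hmono hx⟩
  have h := hp.2.1 x
  rw [div_mul_eq_mul_div, eq_div_iff (hpos x).ne']
  linarith

section IgnitionFreeZone

variable {m c ε a : ℝ} {p : ℝ → ℝ}

theorem deriv_le_of_ode (hm : 2 < m) (hc : 0 < c) (hp : ContDiff ℝ 2 p)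
    (hl : Tendsto p atBot (𝓝 ε)) (hpos : ∀ x, 0 < p x)
    (hode : ∀ x ≤ a, deriv (deriv p) x = (c - deriv p x / (m - 2)) / p x * deriv p x)
    {x : ℝ} (hx : x ≤ a) : deriv p x ≤ c * (m - 2) := by
  by_contra! hgt
  obtain ⟨b, hb, hbx⟩ := exists_between hgt
  have hb0 : 0 < b := (mul_pos hc (by linarith)).trans hb
  obtain ⟨x₀, hx₀, hlt⟩ :=
    exists_deriv_lt_of_tendsto_atBot (hp.differentiable two_ne_zero) hl hb0 x
  -- where `deriv p = b > c (m - 2)` the equation forces `deriv p` to decrease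
  have hfence := image_le_of_deriv_right_lt_deriv_boundary (a := x₀) (b := x)
    (B := fun _ => b) (B' := fun _ => 0) (hp.continuous_deriv one_le_two).continuousOn
    (fun y _ => (hp.differentiable_deriv_two y).hasDerivAt.hasDerivWithinAt) hlt.le
    (fun _ => hasDerivAt_const _ _) (fun y hy hyb => by
      have hcb : c - b / (m - 2) < 0 := by
        rw [sub_neg, lt_div_iff₀ (by linarith)]
        exact hb
      rw [hode y (hy.2.le.trans hx), hyb]
      exact mul_neg_of_neg_of_pos (div_neg_of_neg_of_pos hcb (hpos y)) hb0)
    ⟨hx₀, le_rfl⟩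
  linarith

theorem monotoneOn_deriv_of_ode (hm : 2 < m) (hc : 0 < c) (hp : ContDiff ℝ 2 p)
    (hl : Tendsto p atBot (𝓝 ε)) (hpos : ∀ x, 0 < p x) (hnn : ∀ x, 0 ≤ deriv p x)
    (hode : ∀ x ≤ a, deriv (deriv p) x = (c - deriv p x / (m - 2)) / p x * deriv p x) :
    MonotoneOn (deriv p) (Iic a) :=
  monotoneOn_Iic_of_hasDerivAt (fun x => (hp.differentiable_deriv_two x).hasDerivAt) fun x hx => by
    have hrate : 0 ≤ c - deriv p x / (m - 2) := by
      rw [sub_nonneg, div_le_iff₀ (by linarith)]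
      exact deriv_le_of_ode hm hc hp hl hpos hode hx.le
    rw [hode x hx.le]
    exact mul_nonneg (div_nonneg hrate (hpos x).le) (hnn x)

theorem tendsto_deriv_of_ode (hm : 2 < m) (hc : 0 < c) (hp : ContDiff ℝ 2 p)
    (hl : Tendsto p atBot (𝓝 ε)) (hpos : ∀ x, 0 < p x) (hnn : ∀ x, 0 ≤ deriv p x)
    (hode : ∀ x ≤ a, deriv (deriv p) x = (c - deriv p x / (m - 2)) / p x * deriv p x) :
    Tendsto (deriv p) atBot (𝓝 0) :=
  tendsto_deriv_atBot_of_monotoneOn (hp.differentiable two_ne_zero) hl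
    (monotoneOn_deriv_of_ode hm hc hp hl hpos hnn hode) hnn

theorem exists_mul_sub_le_deriv_of_ode (hm : 2 < m) (hc : 0 < c) (hp : ContDiff ℝ 2 p)
    (hl : Tendsto p atBot (𝓝 ε)) (hd0 : Tendsto (deriv p) atBot (𝓝 0))
    (hpos : ∀ x, 0 < p x) (hlt : ∀ x, p x < 1) (hnn : ∀ x, 0 ≤ deriv p x)
    (hode : ∀ x ≤ a, deriv (deriv p) x = (c - deriv p x / (m - 2)) / p x * deriv p x) :
    ∃ x₁ ≤ a, ∀ x ≤ x₁, c / 2 * (p x - ε) ≤ deriv p x := by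
  obtain ⟨x₁, hx₁⟩ := eventually_atBot.1 <|
    (hd0.eventually (gt_mem_nhds (mul_pos (half_pos hc) (sub_pos.2 hm)))).and
      (eventually_le_atBot a)
  refine ⟨x₁, (hx₁ x₁ le_rfl).2, fun x hx => le_of_deriv_le_of_tendsto_sub_atBot
    (fun y => ((hp.differentiable two_ne_zero y).hasDerivAt.sub_const ε).const_mul (c / 2))
    (fun y => (hp.differentiable_deriv_two y).hasDerivAt) ?_ (fun y hy => ?_) hx⟩
  · simpa using ((hl.sub_const ε).const_mul (c / 2)).sub hd0
  · obtain ⟨hsmall, hya⟩ := hx₁ y hy.le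
    have hrate : c / 2 ≤ (c - deriv p y / (m - 2)) / p y := by
      have : deriv p y / (m - 2) < c / 2 := by rw [div_lt_iff₀ (by linarith)]; linarith
      rw [le_div_iff₀ (hpos y)]
      nlinarith [hlt y, hpos y]
    rw [hode y hya]
    exact mul_le_mul_of_nonneg_right hrate (hnn y)

theorem deriv_deriv_le_of_ode (hm : 2 < m) (hc : 0 < c) (hε : 0 < ε) (hεp : ∀ x, ε < p x)
    (hnn : ∀ x, 0 ≤ deriv p x)
    (hode : ∀ x ≤ a, deriv (deriv p) x = (c - deriv p x / (m - 2)) / p x * deriv p x)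
    {x : ℝ} (hx : x ≤ a) : deriv (deriv p) x ≤ c / ε * deriv p x := by
  have hrate : (c - deriv p x / (m - 2)) / p x ≤ c / ε :=
    calc (c - deriv p x / (m - 2)) / p x ≤ c / p x := by
          gcongr
          · exact (hε.trans (hεp x)).le
          · exact sub_le_self _ (div_nonneg (hnn x) (by linarith))
      _ ≤ c / ε := by gcongr; exact (hεp x).le
  rw [hode x hx]
  exact mul_le_mul_of_nonneg_right hrate (hnn x)

theorem div_sub_rate_le_mul_sub {m c ε P H : ℝ} (hm : 2 < m) (hc : 0 ≤ c) (hε : 0 < ε)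
    (hP : ε ≤ P) (hH : H ≤ c / ε * (P - ε)) :
    c / ε - (c - H / (m - 2)) / P ≤ c * (m - 1) / ((m - 2) * ε ^ 2) * (P - ε) := by
  have hm2 : 0 < m - 2 := by linarith
  have hP0 : 0 < P := hε.trans_le hP
  set u := c / ε * (P - ε)
  have hu : 0 ≤ u := mul_nonneg (div_nonneg hc hε.le) (by linarith)
  have hsplit : c / ε - (c - H / (m - 2)) / P = (u + H / (m - 2)) / P := by
    simp only [u]; field_simp; ring
  rw [hsplit, div_le_iff₀ hP0]
  calc u + H / (m - 2) ≤ u * (1 + 1 / (m - 2)) := by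
        rw [mul_add, mul_one, mul_one_div]; gcongr
    _ ≤ u * (1 + 1 / (m - 2)) * (P / ε) :=
        le_mul_of_one_le_right (by positivity) ((one_le_div hε).2 hP)
    _ = c * (m - 1) / ((m - 2) * ε ^ 2) * (P - ε) * P := by
        simp only [u]; field_simp; ring

theorem exists_tendsto_deriv_mul_exp_of_ode (hm : 2 < m) (hc : 0 < c) (hε : 0 < ε)
    (hp : ContDiff ℝ 2 p) (hl : Tendsto p atBot (𝓝 ε)) (hrange : ∀ x, ε < p x ∧ p x < 1)
    (hnn : ∀ x, 0 ≤ deriv p x)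
    (hode : ∀ x ≤ a, deriv (deriv p) x = (c - deriv p x / (m - 2)) / p x * deriv p x) :
    ∃ L, 0 < L ∧ Tendsto (fun x => deriv p x * exp (-(c / ε * x))) atBot (𝓝 L) := by
  have hpos : ∀ x, 0 < p x := fun x => hε.trans (hrange x).1
  have hdp : ∀ x, HasDerivAt p (deriv p x) x := fun x =>
    (hp.differentiable two_ne_zero x).hasDerivAt
  have hd0 := tendsto_deriv_of_ode hm hc hp hl hpos hnn hode
  have hup : ∀ x ≤ a, deriv p x ≤ c / ε * (p x - ε) := fun x hx =>
    le_of_deriv_le_of_tendsto_sub_atBot (fun y => (hp.differentiable_deriv_two y).hasDerivAt)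
      (fun y => ((hdp y).sub_const ε).const_mul (c / ε))
      (by simpa using hd0.sub ((hl.sub_const ε).const_mul (c / ε)))
      (fun y hy => deriv_deriv_le_of_ode hm hc hε (fun x => (hrange x).1) hnn hode hy.le) hx
  obtain ⟨x₁, hx₁a, hlow⟩ :=
    exists_mul_sub_le_deriv_of_ode hm hc hp hl hd0 hpos (fun x => (hrange x).2) hnn hode
  set D := (p x₁ - ε) * exp (-(c / 2 * x₁))
  have hD : 0 ≤ D := (mul_pos (sub_pos.2 (hrange x₁).1) (exp_pos _)).le
  have hdecay : ∀ x ≤ x₁, p x - ε ≤ D * exp (c / 2 * x) := fun x hx => by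
    refine (le_mul_exp_of_mul_le_deriv (fun y => (hdp y).sub_const ε)
      (fun y hy => hlow y hy.le) hx).trans_eq ?_
    rw [mul_assoc, ← exp_add]
    ring_nf
  set K := c * (m - 1) / ((m - 2) * ε ^ 2)
  have hK : 0 ≤ K := div_nonneg (mul_nonneg hc.le (by linarith)) (by positivity)
  have hx₁ : 0 < deriv p x₁ :=
    (mul_pos (half_pos hc) (sub_pos.2 (hrange x₁).1)).trans_le (hlow x₁ le_rfl)
  refine exists_tendsto_mul_exp_neg_of_deriv_bounds (C := K * D) hp.differentiable_deriv_two
    (half_pos hc) (mul_nonneg hK hD) hx₁ (fun x hx => ?_) fun x hx =>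
      deriv_deriv_le_of_ode hm hc hε (fun x => (hrange x).1) hnn hode (hx.le.trans hx₁a)
  have hdef := div_sub_rate_le_mul_sub hm hc.le hε (hrange x).1.le (hup x (hx.le.trans hx₁a))
  have hKD := mul_le_mul_of_nonneg_left (hdecay x hx.le) hK
  rw [hode x (hx.le.trans hx₁a)]
  exact mul_le_mul_of_nonneg_right (by linarith [mul_assoc K D (exp (c / 2 * x))]) (hnn x)

end IgnitionFreeZone

theorem stmt2 (m θ ε c : ℝ) (G p : ℝ → ℝ) (hm : 2 < m)
    (hG : Ignition G θ) (hε : ε ∈ Set.Ioo 0 θ) (hc : 0 < c)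
    (hp : IsTW m θ ε G c p)
    (hrange : ∀ x : ℝ, ε < p x ∧ p x < 1) (hmono : StrictMono p) :
    (∃ L : ℝ, 0 < L ∧
      Filter.Tendsto (fun x : ℝ => deriv p x * Real.exp (-(c * x / ε)))
        Filter.atBot (nhds L)) ∧
    (∃ M : ℝ, 0 < M ∧ ∃ xbar : ℝ, ∀ x : ℝ, x ≤ xbar →
      0 < p x - ε ∧ p x - ε ≤ M * Real.exp (c * x / ε)) := by
  have hε0 : 0 < ε := hε.1
  have hpos : ∀ x, 0 < p x := fun x => hε0.trans (hrange x).1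
  have hnn : ∀ x, 0 ≤ deriv p x := fun _ => hmono.monotone.deriv_nonneg
  obtain ⟨L, hL, hlim⟩ :=
    exists_tendsto_deriv_mul_exp_of_ode hm hc hε0 hp.1 hp.2.2.1 hrange hnn
      fun x hx => hp.deriv_deriv_eq hG hmono.monotone hpos hx
  refine ⟨⟨L, hL, by simpa only [mul_div_right_comm] using hlim⟩, ?_⟩
  obtain ⟨xbar, hxbar⟩ :=
    eventually_atBot.1 (hlim.eventually (gt_mem_nhds (lt_two_mul_self hL)))
  refine ⟨2 * L / (c / ε), by positivity, xbar, fun x hx => ⟨sub_pos.2 (hrange x).1, ?_⟩⟩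
  rw [mul_div_right_comm c x ε]
  refine sub_le_mul_exp_of_deriv_le (fun y => (hp.1.differentiable two_ne_zero y).hasDerivAt)
    hp.2.2.1 (div_pos hc hε0) (fun y hy => ?_) hx
  calc deriv p y = deriv p y * exp (-(c / ε * y)) * exp (c / ε * y) := by
        rw [mul_assoc, ← exp_add, neg_add_cancel, exp_zero, mul_one]
    _ ≤ 2 * L * exp (c / ε * y) := mul_le_mul_of_nonneg_right (hxbar y hy.le).le (exp_pos _).le
end
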